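/- Two abelian groups that are elementarily equivalent have equal Szmielew invariants for each prime p and each n: the dimensions (as min with ω) of p^n G[p] / p^{n+1} G[p] over 𝔽_p agree. -/

import Mathlib

/-!
For each `k`, the statement `k ≤ dim (pⁿG[p] / pⁿ⁺¹G[p])` is first-order: it says that there are
`a₁, …, a_k ∈ pⁿG[p]` none of whose nontrivial `𝔽_p`-combinations lies in `pⁿ⁺¹G[p]`. Membership
`t ∈ pᵐG[p]` is the formula `(∃ y, pᵐ y = t) ∧ p t = 0`, and there are only finitely many
coefficient vectors in `𝔽_pᵏ`, so this is a single sentence. Elementarily equivalent groups satisfy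
the same such sentences, and `min(ω, d)` is determined by the set of natural numbers `k ≤ d`.
-/

open FirstOrder FirstOrder.Language

/-- The first-order language `{+, -, 0}` of abelian groups. -/
def abLang : Language where
  Functions
    | 0 => Unit   -- the constant 0
    | 1 => Unit   -- negation
    | 2 => Unit   -- addition
    | _ + 3 => Empty
  Relations := fun _ => Empty

/-- The natural `abLang`-structure on an abelian group. -/
def abStructure (G : Type) [AddCommGroup G] : abLang.Structure G where
  funMap {n} f x :=
    match n, f with
    | 0, _ => 0
    | 1, _ => -(x 0)
    | 2, _ => x 0 + x 1
  RelMap {n} r _ := r.elim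

/-- The subgroup `pⁿG[p] = pⁿG ∩ G[p]` of elements of the form `pⁿ • x` that are
annihilated by `p`. -/
def szmielewSubgroup (G : Type) [AddCommGroup G] (p n : ℕ) : AddSubgroup G where
  carrier := {g | (∃ x : G, p ^ n • x = g) ∧ p • g = 0}
  zero_mem' := ⟨⟨0, smul_zero _⟩, smul_zero _⟩
  add_mem' := fun {a b} ha hb =>
    ⟨⟨ha.1.choose + hb.1.choose, by rw [smul_add, ha.1.choose_spec, hb.1.choose_spec]⟩,
      by rw [smul_add, ha.2, hb.2, add_zero]⟩
  neg_mem' := fun {a} ha =>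
    ⟨⟨-ha.1.choose, by rw [smul_neg, ha.1.choose_spec]⟩, by rw [smul_neg, ha.2, neg_zero]⟩

/-- The quotient `pⁿG[p] / pⁿ⁺¹G[p]`. -/
abbrev szmielewQuotient (G : Type) [AddCommGroup G] (p n : ℕ) : Type :=
  szmielewSubgroup G p n ⧸
    (szmielewSubgroup G p (n + 1)).addSubgroupOf (szmielewSubgroup G p n)

/-- The quotient `pⁿG[p] / pⁿ⁺¹G[p]` is a vector space over `𝔽_p = ZMod p`. -/
noncomputable instance szmielewModule (G : Type) [AddCommGroup G] (p n : ℕ) :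
    Module (ZMod p) (szmielewQuotient G p n) :=
  QuotientAddGroup.zmodModule (by
    intro x
    have hx : p • x = 0 := Subtype.ext (by simpa using x.2.2)
    rw [hx]
    exact zero_mem _)

/-- The Szmielew invariant `U(p, n, G) = min(ω, dim_{𝔽_p} (pⁿG[p] / pⁿ⁺¹G[p]))`. -/
noncomputable def szmielewInvariant (G : Type) [AddCommGroup G] (p n : ℕ) : Cardinal :=
  min Cardinal.aleph0 (Module.rank (ZMod p) (szmielewQuotient G p n))

attribute [local instance] abStructure

namespace abLang

variable {α : Type*}

instance : Zero (abLang.Term α) := ⟨Constants.term (() : abLang.Functions 0)⟩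

instance : Add (abLang.Term α) := ⟨Functions.apply₂ (() : abLang.Functions 2)⟩

instance : SMul ℕ (abLang.Term α) := ⟨nsmulRec⟩

variable {G : Type} [AddCommGroup G]

@[simp] theorem realize_zero (v : α → G) : (0 : abLang.Term α).realize v = 0 := rfl

@[simp] theorem realize_add (t s : abLang.Term α) (v : α → G) :
    (t + s).realize v = t.realize v + s.realize v := rfl

@[simp] theorem realize_nsmul (m : ℕ) (t : abLang.Term α) (v : α → G) :
    (m • t).realize v = m • t.realize v := by
  induction m with
  | zero => exact (zero_nsmul _).symm
  | succ m ih => rw [succ_nsmul, ← ih]; rfl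

@[simp] theorem realize_listSum (l : List (abLang.Term α)) (v : α → G) :
    l.sum.realize v = (l.map (Term.realize v)).sum := by
  induction l with
  | nil => rfl
  | cons t l ih => simp [ih]

end abLang

section Sentences

variable {α : Type*} (p : ℕ)

noncomputable def szmielewMemFormula (n : ℕ) (t : abLang.Term α) : abLang.Formula α :=
  Formula.iExs Unit (Term.equal ((p ^ n) • Term.var (Sum.inr ())) (t.relabel Sum.inl)) ⊓
    Term.equal (p • t) 0

variable {G : Type} [AddCommGroup G]

@[simp] theorem realize_szmielewMemFormula (n : ℕ) (t : abLang.Term α) (v : α → G) :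
    (szmielewMemFormula p n t).Realize v ↔ t.realize v ∈ szmielewSubgroup G p n := by
  simp [szmielewMemFormula, szmielewSubgroup, (Equiv.funUnique Unit G).exists_congr_left]

variable [NeZero p]

noncomputable def szmielewRankSentence (n k : ℕ) : abLang.Sentence :=
  Formula.iExs (Fin k) <|
    (Formula.iInf fun i => szmielewMemFormula p n (Term.var (Sum.inr i))) ⊓
    Formula.iInf fun c : {c : Fin k → ZMod p // c ≠ 0} =>
      (szmielewMemFormula p (n + 1)
        (List.ofFn fun i => (c.1 i).val • Term.var (Sum.inr i)).sum).not

theorem realize_szmielewRankSentence (n k : ℕ) :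
    G ⊨ szmielewRankSentence p n k ↔
      ∃ a : Fin k → G, (∀ i, a i ∈ szmielewSubgroup G p n) ∧
        ∀ c : Fin k → ZMod p, c ≠ 0 →
          ∑ i, (c i).val • a i ∉ szmielewSubgroup G p (n + 1) := by
  simp [szmielewRankSentence, Sentence.Realize, List.map_ofFn, Function.comp_def, List.sum_ofFn]

end Sentences

namespace szmielewQuotient

variable {G : Type} [AddCommGroup G] {p : ℕ} [NeZero p] {n k : ℕ}

theorem sum_smul_mk_eq_zero_iff (b : Fin k → szmielewSubgroup G p n) (c : Fin k → ZMod p) :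
    ∑ i, c i • (QuotientAddGroup.mk (b i) : szmielewQuotient G p n) = 0 ↔
      ∑ i, (c i).val • (b i : G) ∈ szmielewSubgroup G p (n + 1) := by
  have hval : ∀ i, c i • (QuotientAddGroup.mk (b i) : szmielewQuotient G p n) =
      QuotientAddGroup.mk ((c i).val • b i) := fun i => by
    rw [QuotientAddGroup.mk_nsmul, ← Nat.cast_smul_eq_nsmul (ZMod p), ZMod.natCast_zmod_val]
  simp_rw [hval, ← QuotientAddGroup.mk_sum, QuotientAddGroup.eq_zero_iff,
    AddSubgroup.mem_addSubgroupOf, AddSubgroup.val_finsetSum, AddSubgroup.coe_nsmul]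

theorem linearIndependent_mk_iff (b : Fin k → szmielewSubgroup G p n) :
    LinearIndependent (ZMod p) (fun i => (QuotientAddGroup.mk (b i) : szmielewQuotient G p n)) ↔
      ∀ c : Fin k → ZMod p, c ≠ 0 →
        ∑ i, (c i).val • (b i : G) ∉ szmielewSubgroup G p (n + 1) := by
  simp only [Fintype.linearIndependent_iff, sum_smul_mk_eq_zero_iff, Ne, not_imp_not, funext_iff,
    Pi.zero_apply]

theorem natCast_le_rank_iff [Nontrivial (ZMod p)] :
    (k : Cardinal) ≤ Module.rank (ZMod p) (szmielewQuotient G p n) ↔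
      ∃ a : Fin k → G, (∀ i, a i ∈ szmielewSubgroup G p n) ∧
        ∀ c : Fin k → ZMod p, c ≠ 0 →
          ∑ i, (c i).val • a i ∉ szmielewSubgroup G p (n + 1) := by
  rw [_root_.natCast_le_rank_iff]
  constructor
  · rintro ⟨v, hv⟩
    obtain ⟨b, rfl⟩ := (QuotientAddGroup.mk_surjective).comp_left v
    exact ⟨fun i => b i, fun i => (b i).2, (linearIndependent_mk_iff b).1 hv⟩
  · rintro ⟨a, ha, hind⟩
    exact ⟨_, (linearIndependent_mk_iff fun i => ⟨a i, ha i⟩).2 hind⟩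

end szmielewQuotient

open scoped Cardinal in
theorem Cardinal.min_aleph0_eq_of_forall_natCast_le_iff {a b : Cardinal}
    (h : ∀ k : ℕ, (k : Cardinal) ≤ a ↔ (k : Cardinal) ≤ b) : min ℵ₀ a = min ℵ₀ b := by
  have hab : toENat a = toENat b :=
    ENat.eq_of_forall_natCast_le_iff fun k => by simpa only [natCast_le_toENat] using h k
  rw [← toENat_eq_iff_of_le_aleph0 (min_le_left _ _) (min_le_left _ _),
    (OrderHomClass.mono toENat).map_min, (OrderHomClass.mono toENat).map_min, hab]

/-- Elementarily equivalent abelian groups have equal Szmielew invariants: for each prime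
`p` and each `n`, the truncated dimensions of `pⁿG[p]/pⁿ⁺¹G[p]` over `𝔽_p` agree. -/
theorem szmielewInvariant_eq_of_elementarilyEquivalent (G H : Type)
    [AddCommGroup G] [AddCommGroup H]
    (h : ∀ φ : abLang.Sentence,
      (letI := abStructure G; G ⊨ φ) ↔ (letI := abStructure H; H ⊨ φ))
    (p : ℕ) (hp : p.Prime) (n : ℕ) :
    szmielewInvariant G p n = szmielewInvariant H p n := by
  have : Fact (1 < p) := ⟨hp.one_lt⟩
  refine Cardinal.min_aleph0_eq_of_forall_natCast_le_iff fun k => ?_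
  rw [szmielewQuotient.natCast_le_rank_iff, szmielewQuotient.natCast_le_rank_iff,
    ← realize_szmielewRankSentence, ← realize_szmielewRankSentence]
  exact h _
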